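/- arXiv:2112.02197 — 2 statements merged into one kernel-verified Lean document; each statement's English description precedes it below -/
import Mathlib

section
/- (Off-diagonal decay of the inverse) Let A be a symmetric positive definite matrix on a connected undirected graph G = (V,E) satisfying cI ⪯ A ⪯ LI with 0 < c < L and geodesic-width ω(A) ≤ ω. Then the entries G1(i,j) of A^{-1} satisfy |G1(i,j)| ≤ (1/c) (1 − c/L)^{ρ(i,j)/ω} for all i,j ∈ V. -/
open Matrix in
theorem psdSmul {V : Type*} [Fintype V] [DecidableEq V] {M : Matrix V V ℝ} {a : ℝ}
    (hM : M.PosSemidef) (ha : 0 ≤ a) : (a • M).PosSemidef := by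
  rw [posSemidef_iff_dotProduct_mulVec]
  constructor
  · show (a • M)ᴴ = a • M
    rw [conjTranspose_smul, show Mᴴ = M from hM.1, star_trivial]
  · intro x
    have := hM.dotProduct_mulVec_nonneg x
    simp only [smul_mulVec, dotProduct_smul, smul_eq_mul]
    exact mul_nonneg ha (by simpa using this)

open Matrix in
theorem entryAbsLe {V : Type*} [Fintype V] [DecidableEq V] {M : Matrix V V ℝ} {t : ℝ}
    (hM : M.PosSemidef) (ht : (t • (1 : Matrix V V ℝ) - M).PosSemidef) (i j : V) :
    |M i j| ≤ t := by
  have hsym : M j i = M i j := by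
    have := hM.1.apply j i
    simpa using this.symm
  have diag0 : ∀ k, 0 ≤ M k k := by
    intro k
    have := hM.dotProduct_mulVec_nonneg (Pi.single k 1)
    simpa using this
  have diagt : ∀ k, M k k ≤ t := by
    intro k
    have := ht.dotProduct_mulVec_nonneg (Pi.single k 1)
    simp [sub_mulVec, smul_mulVec, dotProduct_sub, Pi.single_apply] at this
    linarith
  by_cases hij : i = j
  · subst hij
    rw [abs_le]
    constructor
    · linarith [diag0 i, diagt i]
    · exact diagt i
  · have h2 := hM.dotProduct_mulVec_nonneg (Pi.single i 1 - Pi.single j 1)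
    have h3 := ht.dotProduct_mulVec_nonneg (Pi.single i 1 + Pi.single j 1)
    have h4 := ht.dotProduct_mulVec_nonneg (Pi.single i 1 - Pi.single j 1)
    simp [mulVec_add, mulVec_sub, sub_mulVec, smul_mulVec, dotProduct_add, dotProduct_sub,
      add_dotProduct, sub_dotProduct, Pi.single_apply, hij, Ne.symm hij] at h2 h3 h4
    rw [abs_le]
    constructor <;> [(clear h3); (clear h4)] <;> nlinarith [diag0 i, diag0 j, hsym]

open Matrix in
/-- Off-diagonal decay of the inverse: if `A` is symmetric with `cI ⪯ A ⪯ LI`,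
`0 < c < L`, and geodesic-width at most `ω`, then
`|A⁻¹ i j| ≤ (1/c) (1 - c/L) ^ (ρ(i,j)/ω)`. -/
theorem dac_stmt4 {V : Type*} [Fintype V] [DecidableEq V] (ρ : V → V → ℕ)
    (hρself : ∀ i, ρ i i = 0) (hρsymm : ∀ i j, ρ i j = ρ j i)
    (hρtri : ∀ i j k, ρ i k ≤ ρ i j + ρ j k)
    (A : Matrix V V ℝ) (hA : A.IsSymm)
    (c L : ℝ) (hc : 0 < c) (hcL : c < L)
    (hlow : (A - c • (1 : Matrix V V ℝ)).PosSemidef)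
    (hup : (L • (1 : Matrix V V ℝ) - A).PosSemidef)
    (ω : ℕ) (hω : 0 < ω) (hwidth : ∀ i j, ω < ρ i j → A i j = 0) :
    ∀ i j, |A⁻¹ i j| ≤ (1 / c) * (1 - c / L) ^ ((ρ i j : ℝ) / ω) := by
  have hL : (0:ℝ) < L := hc.trans hcL
  set q : ℝ := 1 - c / L with hqdef
  have hq0 : 0 < q := by
    have : c / L < 1 := (div_lt_one hL).mpr hcL
    simp [hqdef]; linarith
  have hq1 : q ≤ 1 := by
    have : 0 < c / L := div_pos hc hL
    simp [hqdef]; linarith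
  set B : Matrix V V ℝ := 1 - L⁻¹ • A with hBdef
  have hAB : A = L • (1 : Matrix V V ℝ) - L • B := by
    rw [hBdef, smul_sub, smul_smul, mul_inv_cancel₀ hL.ne', one_smul]
    abel
  have hB0 : B.PosSemidef := by
    have hBe : B = L⁻¹ • (L • (1 : Matrix V V ℝ) - A) := by
      rw [smul_sub, smul_smul, inv_mul_cancel₀ hL.ne', one_smul, hBdef]
    rw [hBe]
    exact psdSmul hup (by positivity)
  have hBq : (q • (1 : Matrix V V ℝ) - B).PosSemidef := by
    have hBe : q • (1 : Matrix V V ℝ) - B = L⁻¹ • (A - c • 1) := by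
      ext i j
      by_cases hij : i = j <;>
        simp [hqdef, hBdef, Matrix.one_apply, hij, Matrix.smul_apply, Matrix.sub_apply] <;>
        field_simp <;> ring
    rw [hBe]
    exact psdSmul hlow (by positivity)
  -- square root of B
  set s : Matrix V V ℝ := (open scoped MatrixOrder in CFC.sqrt B) with hsdef
  have hs : s.PosSemidef := (open scoped MatrixOrder in (CFC.sqrt_nonneg B).posSemidef)
  have hsherm : sᴴ = s := hs.1
  have hss : s * s = B := (open scoped MatrixOrder in CFC.sqrt_mul_sqrt_self B hB0.nonneg)
  have hsB : Commute s B := by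
    rw [Commute, SemiconjBy, ← hss, ← mul_assoc]
  have hsA : Commute s A := by
    rw [hAB]
    exact (Commute.smul_right (Commute.one_right s) L).sub_right (hsB.smul_right L)
  -- A is positive definite
  have hApd : A.PosDef := by
    have h1 : (c • (1 : Matrix V V ℝ)).PosDef := by
      have : PosDef (Matrix.diagonal (fun _ : V => c)) :=
        Matrix.posDef_diagonal_iff.mpr fun _ => hc
      simpa [Matrix.smul_one_eq_diagonal] using this
    have := h1.add_posSemidef hlow
    simpa using this
  have hApsd : A.PosSemidef := hApd.posSemidef
  have hAinv : A⁻¹.PosDef := hApd.inv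
  have hdet : IsUnit A.det := A.isUnit_iff_isUnit_det.mp hApd.isUnit
  have hAAinv : A * A⁻¹ = 1 := Matrix.mul_nonsing_inv A hdet
  have hAinvA : A⁻¹ * A = 1 := Matrix.nonsing_inv_mul A hdet
  have hsAinv : Commute s A⁻¹ := by
    rw [Commute, SemiconjBy]
    calc s * A⁻¹ = (A⁻¹ * A) * s * A⁻¹ := by rw [hAinvA, one_mul]
      _ = A⁻¹ * (A * s) * A⁻¹ := by rw [mul_assoc A⁻¹ A s]
      _ = A⁻¹ * (s * A) * A⁻¹ := by rw [← hsA.eq]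
      _ = A⁻¹ * s * (A * A⁻¹) := by simp only [mul_assoc]
      _ = A⁻¹ * s := by rw [hAAinv, mul_one]
  -- power bound: B^k ⪯ q^k • 1
  have hpow : ∀ k : ℕ, ((q ^ k) • (1 : Matrix V V ℝ) - B ^ k).PosSemidef := by
    intro k
    induction k with
    | zero => simpa using Matrix.PosSemidef.zero
    | succ k ih =>
      have h1 : (s * ((q ^ k) • (1 : Matrix V V ℝ) - B ^ k) * s).PosSemidef := by
        have := ih.conjTranspose_mul_mul_same s
        rwa [hsherm] at this
      have h2 : s * ((q ^ k) • (1 : Matrix V V ℝ) - B ^ k) * s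
          = (q ^ k) • B - B ^ (k + 1) := by
        rw [Matrix.mul_sub, Matrix.sub_mul, Matrix.mul_smul, Matrix.smul_mul, mul_one,
          hss, mul_assoc, (hsB.symm.pow_left k).eq, ← mul_assoc, hss, ← pow_succ']
      have h3 : (q ^ (k + 1)) • (1 : Matrix V V ℝ) - B ^ (k + 1)
          = (q ^ k) • (q • (1 : Matrix V V ℝ) - B) + ((q ^ k) • B - B ^ (k + 1)) := by
        rw [smul_sub, smul_smul, ← pow_succ]
        abel
      rw [h3, ← h2]
      exact (psdSmul hBq (pow_nonneg hq0.le k)).add h1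
  -- geodesic width of B and its powers
  have hBw : ∀ i j, ω < ρ i j → B i j = 0 := by
    intro i j h
    have hij : i ≠ j := by
      rintro rfl
      rw [hρself] at h
      omega
    simp [hBdef, Matrix.sub_apply, Matrix.one_apply_ne hij, Matrix.smul_apply, hwidth i j h]
  have hBkw : ∀ k i j, k * ω < ρ i j → (B ^ k) i j = 0 := by
    intro k
    induction k with
    | zero =>
      intro i j h
      have hij : i ≠ j := by
        rintro rfl
        rw [hρself] at h
        omega
      simp [Matrix.one_apply_ne hij]
    | succ k ih =>
      intro i j h
      rw [pow_succ', Matrix.mul_apply]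
      apply Finset.sum_eq_zero
      intro l _
      by_cases hl : ω < ρ i l
      · rw [hBw i l hl, zero_mul]
      · have htri := hρtri i l j
        have hmul : (k + 1) * ω = k * ω + ω := by ring
        have : k * ω < ρ l j := by omega
        rw [ih l j this, mul_zero]
  intro i j
  set m : ℕ := ⌈(ρ i j : ℝ) / ω⌉₊ with hmdef
  -- Neumann identity
  have hgeom : A * (L⁻¹ • ∑ k ∈ Finset.range m, B ^ k) = 1 - B ^ m := by
    have hL1 : A = L • ((1 : Matrix V V ℝ) - B) := by rw [smul_sub, hAB]
    rw [hL1, Matrix.smul_mul, Matrix.mul_smul, smul_smul, mul_inv_cancel₀ hL.ne', one_smul]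
    exact mul_neg_geom_sum B m
  have hNeu : A⁻¹ = L⁻¹ • (∑ k ∈ Finset.range m, B ^ k) + A⁻¹ * B ^ m := by
    have h := congrArg (fun X => A⁻¹ * X) hgeom
    simp only [← mul_assoc, hAinvA, one_mul, Matrix.mul_sub, mul_one] at h
    rw [h]
    abel
  have hzero : ∀ k ∈ Finset.range m, (B ^ k) i j = 0 := by
    intro k hk
    apply hBkw
    have h1 : (k : ℝ) < (ρ i j : ℝ) / ω := Nat.lt_ceil.mp (Finset.mem_range.mp hk)
    have h2 : (k : ℝ) * ω < ρ i j := (lt_div_iff₀ (by positivity)).mp h1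
    exact_mod_cast h2
  have hentry : A⁻¹ i j = (A⁻¹ * B ^ m) i j := by
    conv_lhs => rw [hNeu]
    simp [Matrix.add_apply, Matrix.smul_apply, Matrix.sum_apply, Finset.sum_eq_zero hzero]
  -- PSD facts about C = A⁻¹ * B^m
  have hsmAinv : Commute (s ^ m) A⁻¹ := (hsAinv.pow_left m)
  have hsm2 : s ^ m * s ^ m = B ^ m := by
    rw [← (Commute.refl s).mul_pow m, hss]
  have hCeq : A⁻¹ * B ^ m = (s ^ m)ᴴ * A⁻¹ * s ^ m := by
    rw [conjTranspose_pow, hsherm, hsmAinv.eq, mul_assoc, hsm2]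
  have hCpsd : (A⁻¹ * B ^ m).PosSemidef := by
    rw [hCeq]
    exact hAinv.posSemidef.conjTranspose_mul_mul_same _
  -- A⁻¹ ⪯ c⁻¹ • 1
  set u : Matrix V V ℝ := (open scoped MatrixOrder in CFC.sqrt A) with hudef
  have huherm : uᴴ = u := (open scoped MatrixOrder in (CFC.sqrt_nonneg A).posSemidef).1
  have huu : u * u = A := (open scoped MatrixOrder in CFC.sqrt_mul_sqrt_self A hApsd.nonneg)
  have huA : Commute u A := by
    rw [Commute, SemiconjBy, ← huu, ← mul_assoc]
  have hmid0 : ((c⁻¹ : ℝ) • A - 1).PosSemidef := by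
    have he : (c⁻¹ : ℝ) • (A - c • (1 : Matrix V V ℝ)) = c⁻¹ • A - 1 := by
      rw [smul_sub, smul_smul, inv_mul_cancel₀ hc.ne', one_smul]
    rw [← he]
    exact psdSmul hlow (by positivity)
  have hmid : ((c⁻¹ : ℝ) • (A * A) - A).PosSemidef := by
    have he : uᴴ * ((c⁻¹ : ℝ) • A - 1) * u = (c⁻¹ : ℝ) • (A * A) - A := by
      rw [huherm, Matrix.mul_sub, Matrix.sub_mul, mul_one, huu, Matrix.mul_smul,
        Matrix.smul_mul, huA.eq, mul_assoc, huu]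
    rw [← he]
    exact hmid0.conjTranspose_mul_mul_same u
  have hup2 : ((c⁻¹ : ℝ) • (1 : Matrix V V ℝ) - A⁻¹).PosSemidef := by
    have e1 : A⁻¹ * (A * A) * A⁻¹ = 1 := by
      calc A⁻¹ * (A * A) * A⁻¹ = (A⁻¹ * A) * (A * A⁻¹) := by simp only [mul_assoc]
        _ = 1 := by rw [hAinvA, hAAinv, one_mul]
    have e2 : A⁻¹ * A * A⁻¹ = A⁻¹ := by rw [hAinvA, one_mul]
    have he : (A⁻¹)ᴴ * ((c⁻¹ : ℝ) • (A * A) - A) * A⁻¹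
        = (c⁻¹ : ℝ) • (1 : Matrix V V ℝ) - A⁻¹ := by
      rw [hAinv.1, Matrix.mul_sub, Matrix.sub_mul, Matrix.mul_smul, Matrix.smul_mul, e1, e2]
    rw [← he]
    exact hmid.conjTranspose_mul_mul_same A⁻¹
  -- combine: A⁻¹ * B^m ⪯ (c⁻¹ * q^m) • 1
  have hval : (((c⁻¹ : ℝ) * q ^ m) • (1 : Matrix V V ℝ) - A⁻¹ * B ^ m).PosSemidef := by
    have h5 : (s ^ m)ᴴ * ((c⁻¹ : ℝ) • (1 : Matrix V V ℝ) - A⁻¹) * s ^ m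
        = (c⁻¹ : ℝ) • B ^ m - A⁻¹ * B ^ m := by
      rw [conjTranspose_pow, hsherm, Matrix.mul_sub, Matrix.sub_mul, Matrix.mul_smul, mul_one,
        Matrix.smul_mul, hsm2, hsmAinv.eq, mul_assoc, hsm2]
    have he : ((c⁻¹ : ℝ) * q ^ m) • (1 : Matrix V V ℝ) - A⁻¹ * B ^ m
        = (c⁻¹ : ℝ) • ((q ^ m) • (1 : Matrix V V ℝ) - B ^ m)
          + (s ^ m)ᴴ * ((c⁻¹ : ℝ) • (1 : Matrix V V ℝ) - A⁻¹) * s ^ m := by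
      rw [h5, smul_sub, smul_smul]
      abel
    rw [he]
    exact (psdSmul (hpow m) (by positivity)).add (hup2.conjTranspose_mul_mul_same _)
  have hfin := entryAbsLe hCpsd hval i j
  rw [hentry]
  refine hfin.trans ?_
  rw [one_div]
  have hqm : q ^ m ≤ q ^ ((ρ i j : ℝ) / ω) := by
    rw [← Real.rpow_natCast q m]
    exact Real.rpow_le_rpow_of_exponent_ge hq0 hq1 (Nat.le_ceil _)
  exact mul_le_mul_of_nonneg_left hqm (by positivity)
end

section
/- Let A and B be matrices on a connected undirected graph G = (V,E), with ω(A) ≤ ω, cI ⪯ A ⪯ LI for 0 < c < L, ω(B) ≤ ω, and ‖B‖_{B_2} ≤ M. Then the entries G2(i,j) of A^{-1}B satisfy |G2(i,j)| ≤ (LM)/(c(L−c)) · (1 − c/L)^{ρ(i,j)/ω} for all i,j ∈ V. -/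
open Matrix Finset

section Helpers

variable {V : Type*} [Fintype V] [DecidableEq V]

private lemma dot_self_nonneg (y : V → ℝ) : 0 ≤ y ⬝ᵥ y :=
  Finset.sum_nonneg fun i _ => mul_self_nonneg _

private lemma dot_cs (u v : V → ℝ) : (u ⬝ᵥ v) ^ 2 ≤ (u ⬝ᵥ u) * (v ⬝ᵥ v) := by
  simpa [dotProduct, pow_two] using
    Finset.sum_mul_sq_le_sq_mul_sq Finset.univ u v

private lemma symm_dot {P : Matrix V V ℝ} (hP : Pᵀ = P) (x z : V → ℝ) :
    x ⬝ᵥ P *ᵥ z = (P *ᵥ x) ⬝ᵥ z := by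
  rw [Matrix.dotProduct_mulVec, ← Matrix.mulVec_transpose, hP]

open scoped MatrixOrder in
private lemma psd_cs {Q : Matrix V V ℝ} (hQ : Q.PosSemidef) (x y : V → ℝ) :
    (x ⬝ᵥ Q *ᵥ y) ^ 2 ≤ (x ⬝ᵥ Q *ᵥ x) * (y ⬝ᵥ Q *ᵥ y) := by
  set S := CFC.sqrt Q with hSdef
  have hS : S * S = Q := CFC.sqrt_mul_sqrt_self Q hQ.nonneg
  have hSt : Sᵀ = S := by
    have := (CFC.sqrt_nonneg Q).posSemidef.isHermitian
    rwa [Matrix.IsHermitian, Matrix.conjTranspose_eq_transpose_of_trivial] at this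
  have key : ∀ a b : V → ℝ, a ⬝ᵥ Q *ᵥ b = (S *ᵥ a) ⬝ᵥ (S *ᵥ b) := by
    intro a b
    rw [← hS, ← Matrix.mulVec_mulVec, symm_dot hSt]
  rw [key x y, key x x, key y y]
  exact dot_cs _ _

/-- Entrywise bound from an (squared) operator-norm bound. -/
private lemma entry_bound (C : Matrix V V ℝ) (K : ℝ) (hK : 0 ≤ K)
    (h : ∀ x : V → ℝ, (C *ᵥ x) ⬝ᵥ (C *ᵥ x) ≤ K ^ 2 * (x ⬝ᵥ x)) (a b : V) :
    |C a b| ≤ K := by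
  have h2 := h (Pi.single b 1)
  have hcol : C *ᵥ Pi.single b 1 = fun i => C i b := by
    rw [Matrix.mulVec_single]; ext i; simp
  have hone : (Pi.single b 1 : V → ℝ) ⬝ᵥ Pi.single b 1 = 1 := by
    simp [dotProduct, Pi.single_apply]
  rw [hcol, hone, mul_one] at h2
  have hsq : (C a b) ^ 2 ≤ K ^ 2 := by
    refine le_trans ?_ h2
    have : (C a b) ^ 2 ≤ ∑ i, C i b * C i b := by
      refine le_trans ?_ (Finset.single_le_sum (f := fun i => C i b * C i b)
        (fun i _ => mul_self_nonneg _) (Finset.mem_univ a))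
      rw [pow_two]
    simpa [dotProduct] using this
  calc |C a b| = Real.sqrt ((C a b) ^ 2) := (Real.sqrt_sq_eq_abs _).symm
    _ ≤ Real.sqrt (K ^ 2) := Real.sqrt_le_sqrt hsq
    _ = K := Real.sqrt_sq hK

private lemma op_comp {X Y : Matrix V V ℝ} {Kx Ky : ℝ} (hKx : 0 ≤ Kx)
    (hX : ∀ x : V → ℝ, (X *ᵥ x) ⬝ᵥ (X *ᵥ x) ≤ Kx ^ 2 * (x ⬝ᵥ x))
    (hY : ∀ x : V → ℝ, (Y *ᵥ x) ⬝ᵥ (Y *ᵥ x) ≤ Ky ^ 2 * (x ⬝ᵥ x)) :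
    ∀ x : V → ℝ, ((X * Y) *ᵥ x) ⬝ᵥ ((X * Y) *ᵥ x) ≤ (Kx * Ky) ^ 2 * (x ⬝ᵥ x) := by
  intro x
  rw [← Matrix.mulVec_mulVec]
  calc (X *ᵥ Y *ᵥ x) ⬝ᵥ (X *ᵥ Y *ᵥ x) ≤ Kx ^ 2 * ((Y *ᵥ x) ⬝ᵥ (Y *ᵥ x)) := hX _
    _ ≤ Kx ^ 2 * (Ky ^ 2 * (x ⬝ᵥ x)) :=
      mul_le_mul_of_nonneg_left (hY x) (by positivity)
    _ = (Kx * Ky) ^ 2 * (x ⬝ᵥ x) := by ring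

private lemma width_mul (ρ : V → V → ℕ) (hρtri : ∀ i j k, ρ i k ≤ ρ i j + ρ j k)
    (X Y : Matrix V V ℝ) (a b : ℕ)
    (hX : ∀ i j, a < ρ i j → X i j = 0) (hY : ∀ i j, b < ρ i j → Y i j = 0) :
    ∀ i j, a + b < ρ i j → (X * Y) i j = 0 := by
  intro i j hab
  rw [Matrix.mul_apply]
  refine Finset.sum_eq_zero fun k _ => ?_
  by_cases hk : a < ρ i k
  · rw [hX i k hk, zero_mul]
  · have hb : b < ρ k j := by
      have := hρtri i k j
      omega
    rw [hY k j hb, mul_zero]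

end Helpers

set_option maxHeartbeats 2000000 in
/-- If `cI ⪯ A ⪯ LI` with `0 < c < L`, `ω(A) ≤ ω`, `ω(B) ≤ ω` and `‖B‖_{B_2} ≤ M`,
then the entries of `A⁻¹ B` satisfy
`|(A⁻¹B) i j| ≤ LM/(c(L-c)) (1 - c/L) ^ (ρ(i,j)/ω)`. -/
theorem dac_stmt5 {V : Type*} [Fintype V] [DecidableEq V] (ρ : V → V → ℕ)
    (hρself : ∀ i, ρ i i = 0) (hρsymm : ∀ i j, ρ i j = ρ j i)
    (hρtri : ∀ i j k, ρ i k ≤ ρ i j + ρ j k)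
    (A B : Matrix V V ℝ) (hA : A.IsSymm)
    (c L M : ℝ) (hc : 0 < c) (hcL : c < L) (hM : 0 ≤ M)
    (hlow : (A - c • (1 : Matrix V V ℝ)).PosSemidef)
    (hup : (L • (1 : Matrix V V ℝ) - A).PosSemidef)
    (ω : ℕ) (hω : 0 < ω)
    (hwidthA : ∀ i j, ω < ρ i j → A i j = 0)
    (hwidthB : ∀ i j, ω < ρ i j → B i j = 0)
    (hBnorm : ∀ x : EuclideanSpace ℝ V,
      ‖(WithLp.equiv 2 (V → ℝ)).symm (B.mulVec ((WithLp.equiv 2 (V → ℝ)) x))‖ ≤ M * ‖x‖) :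
    ∀ i j, |(A⁻¹ * B) i j| ≤ L * M / (c * (L - c)) * (1 - c / L) ^ ((ρ i j : ℝ) / ω) := by
  have hL : 0 < L := hc.trans hcL
  set r : ℝ := 1 - c / L with hrdef
  have hr0 : 0 < r := by
    have : c / L < 1 := (div_lt_one hL).mpr hcL
    simp only [hrdef]; linarith
  have hr1 : r < 1 := by
    have : 0 < c / L := div_pos hc hL
    simp only [hrdef]; linarith
  -- quadratic form bounds
  have hAlow : ∀ x : V → ℝ, c * (x ⬝ᵥ x) ≤ x ⬝ᵥ A *ᵥ x := by
    intro x
    have := hlow.dotProduct_mulVec_nonneg x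
    simp only [star_trivial, Matrix.sub_mulVec, Matrix.smul_mulVec,
      Matrix.one_mulVec, dotProduct_sub, dotProduct_smul,
      smul_eq_mul] at this
    linarith
  have hAup : ∀ x : V → ℝ, x ⬝ᵥ A *ᵥ x ≤ L * (x ⬝ᵥ x) := by
    intro x
    have := hup.dotProduct_mulVec_nonneg x
    simp only [star_trivial, Matrix.sub_mulVec, Matrix.smul_mulVec,
      Matrix.one_mulVec, dotProduct_sub, dotProduct_smul,
      smul_eq_mul] at this
    linarith
  -- A is positive definite, hence invertible
  have hc1 : (c • (1 : Matrix V V ℝ)).PosDef := by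
    rw [Matrix.posDef_iff_dotProduct_mulVec]
    constructor
    · rw [Matrix.IsHermitian, Matrix.conjTranspose_smul, star_trivial,
        Matrix.conjTranspose_one]
    · intro x hx
      simp only [Matrix.smul_mulVec, Matrix.one_mulVec, dotProduct_smul,
        smul_eq_mul]
      exact mul_pos hc (Matrix.dotProduct_star_self_pos_iff.mpr hx)
  have hApd : A.PosDef := by
    have h1 : A = (A - c • (1 : Matrix V V ℝ)) + c • (1 : Matrix V V ℝ) := by
      abel
    rw [h1]
    exact Matrix.PosDef.posSemidef_add hlow hc1
  have hdet : IsUnit A.det := Matrix.isUnit_iff_isUnit_det A |>.mp hApd.isUnit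
  -- the iteration matrix P
  set P : Matrix V V ℝ := 1 - L⁻¹ • A with hPdef
  have hPt : Pᵀ = P := by
    rw [hPdef, Matrix.transpose_sub, Matrix.transpose_smul, Matrix.transpose_one, hA]
  have hPform : ∀ x : V → ℝ, x ⬝ᵥ P *ᵥ x = (x ⬝ᵥ x) - L⁻¹ * (x ⬝ᵥ A *ᵥ x) := by
    intro x
    rw [hPdef]
    simp [Matrix.sub_mulVec, Matrix.smul_mulVec, Matrix.one_mulVec,
      dotProduct_sub, dotProduct_smul, smul_eq_mul]
  have hPup : ∀ x : V → ℝ, x ⬝ᵥ P *ᵥ x ≤ r * (x ⬝ᵥ x) := by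
    intro x
    rw [hPform x, hrdef]
    have h1 := hAlow x
    have h2 : L⁻¹ * (c * (x ⬝ᵥ x)) ≤ L⁻¹ * (x ⬝ᵥ A *ᵥ x) :=
      mul_le_mul_of_nonneg_left h1 (by positivity)
    have h3 : L⁻¹ * (c * (x ⬝ᵥ x)) = c / L * (x ⬝ᵥ x) := by
      field_simp
    nlinarith [h2, h3]
  have hPpsd : P.PosSemidef := by
    have hform : P = L⁻¹ • (L • (1 : Matrix V V ℝ) - A) := by
      rw [hPdef, smul_sub, smul_smul, inv_mul_cancel₀ hL.ne', one_smul]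
    rw [Matrix.posSemidef_iff_dotProduct_mulVec]
    constructor
    · rw [Matrix.IsHermitian, Matrix.conjTranspose_eq_transpose_of_trivial, hPt]
    · intro x
      rw [hform]
      simp only [star_trivial, Matrix.smul_mulVec, dotProduct_smul,
        smul_eq_mul]
      exact mul_nonneg (by positivity) (by simpa using hup.dotProduct_mulVec_nonneg x)
  -- operator bound for P
  have hPop : ∀ x : V → ℝ, (P *ᵥ x) ⬝ᵥ (P *ᵥ x) ≤ r ^ 2 * (x ⬝ᵥ x) := by
    intro x
    set t : ℝ := (P *ᵥ x) ⬝ᵥ (P *ᵥ x) with ht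
    have htnn : 0 ≤ t := dot_self_nonneg _
    have hx1 : x ⬝ᵥ P *ᵥ (P *ᵥ x) = t := by rw [symm_dot hPt]
    have hcs := psd_cs hPpsd x (P *ᵥ x)
    rw [hx1] at hcs
    have hb1 : x ⬝ᵥ P *ᵥ x ≤ r * (x ⬝ᵥ x) := hPup x
    have hb2 : (P *ᵥ x) ⬝ᵥ P *ᵥ (P *ᵥ x) ≤ r * t := hPup (P *ᵥ x)
    have hxnn : 0 ≤ x ⬝ᵥ x := dot_self_nonneg x
    rcases eq_or_lt_of_le htnn with h | h
    · rw [← h]; positivity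
    · have h1 : x ⬝ᵥ P *ᵥ x ≤ r * (x ⬝ᵥ x) := hb1
      have hPxnn : 0 ≤ x ⬝ᵥ P *ᵥ x := by simpa using hPpsd.dotProduct_mulVec_nonneg x
      have hPynn : 0 ≤ (P *ᵥ x) ⬝ᵥ P *ᵥ (P *ᵥ x) := by simpa using hPpsd.dotProduct_mulVec_nonneg (P *ᵥ x)
      have : t ^ 2 ≤ (r * (x ⬝ᵥ x)) * (r * t) := by
        calc t ^ 2 ≤ (x ⬝ᵥ P *ᵥ x) * ((P *ᵥ x) ⬝ᵥ P *ᵥ (P *ᵥ x)) := hcs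
          _ ≤ (r * (x ⬝ᵥ x)) * (r * t) :=
            mul_le_mul hb1 hb2 hPynn (by positivity)
      nlinarith [this, h]
  -- operator bound for powers of P
  have hPkop : ∀ (k : ℕ) (x : V → ℝ),
      (P ^ k *ᵥ x) ⬝ᵥ (P ^ k *ᵥ x) ≤ (r ^ k) ^ 2 * (x ⬝ᵥ x) := by
    intro k
    induction k with
    | zero => intro x; simp [Matrix.one_mulVec]
    | succ n ih =>
      intro x
      have := op_comp (X := P) (Y := P ^ n) (Kx := r) (Ky := r ^ n) hr0.le hPop ih x
      rw [← pow_succ'] at this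
      calc (P ^ (n + 1) *ᵥ x) ⬝ᵥ (P ^ (n + 1) *ᵥ x)
          ≤ (r * r ^ n) ^ 2 * (x ⬝ᵥ x) := this
        _ = (r ^ (n + 1)) ^ 2 * (x ⬝ᵥ x) := by rw [← pow_succ']
  -- operator bound for B
  have hBop : ∀ x : V → ℝ, (B *ᵥ x) ⬝ᵥ (B *ᵥ x) ≤ M ^ 2 * (x ⬝ᵥ x) := by
    intro x
    have hnorm : ∀ y : V → ℝ, ‖(WithLp.equiv 2 (V → ℝ)).symm y‖ = Real.sqrt (y ⬝ᵥ y) := by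
      intro y
      rw [EuclideanSpace.norm_eq]
      congr 1
      simp [dotProduct, Real.norm_eq_abs, sq_abs, pow_two]
    have h0 := hBnorm ((WithLp.equiv 2 (V → ℝ)).symm x)
    rw [Equiv.apply_symm_apply] at h0
    rw [hnorm (B *ᵥ x), hnorm x] at h0
    have h1 : 0 ≤ (B *ᵥ x) ⬝ᵥ (B *ᵥ x) := dot_self_nonneg _
    have h2 : 0 ≤ x ⬝ᵥ x := dot_self_nonneg x
    have h3 : 0 ≤ Real.sqrt ((B *ᵥ x) ⬝ᵥ (B *ᵥ x)) := Real.sqrt_nonneg _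
    have h4 := Real.sq_sqrt h1
    have h5 := Real.sq_sqrt h2
    nlinarith [mul_self_nonneg (M * Real.sqrt (x ⬝ᵥ x) - Real.sqrt ((B *ᵥ x) ⬝ᵥ (B *ᵥ x)))]
  -- operator bound for A⁻¹
  have hAinvop : ∀ x : V → ℝ, (A⁻¹ *ᵥ x) ⬝ᵥ (A⁻¹ *ᵥ x) ≤ (c⁻¹) ^ 2 * (x ⬝ᵥ x) := by
    intro x
    set y : V → ℝ := A⁻¹ *ᵥ x with hy
    have hAy : A *ᵥ y = x := by
      rw [hy, Matrix.mulVec_mulVec, Matrix.mul_nonsing_inv A hdet, Matrix.one_mulVec]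
    have h1 : c * (y ⬝ᵥ y) ≤ y ⬝ᵥ A *ᵥ y := hAlow y
    rw [hAy] at h1
    have hcs : (y ⬝ᵥ x) ^ 2 ≤ (y ⬝ᵥ y) * (x ⬝ᵥ x) := dot_cs y x
    have hynn : 0 ≤ y ⬝ᵥ y := dot_self_nonneg y
    have hxnn : 0 ≤ x ⬝ᵥ x := dot_self_nonneg x
    rcases eq_or_lt_of_le hynn with h | h
    · rw [← h]; positivity
    · have hsq : (c * (y ⬝ᵥ y)) ^ 2 ≤ (y ⬝ᵥ x) ^ 2 := by
        have : 0 ≤ c * (y ⬝ᵥ y) := by positivity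
        exact pow_le_pow_left₀ this h1 2
      have key : c ^ 2 * (y ⬝ᵥ y) ≤ x ⬝ᵥ x := by nlinarith [hsq, hcs, h]
      have h2 := mul_le_mul_of_nonneg_left key (by positivity : (0:ℝ) ≤ (c⁻¹) ^ 2)
      calc y ⬝ᵥ y = (c⁻¹) ^ 2 * (c ^ 2 * (y ⬝ᵥ y)) := by field_simp
        _ ≤ (c⁻¹) ^ 2 * (x ⬝ᵥ x) := h2
  -- widths
  have hwidthP : ∀ i j, ω < ρ i j → P i j = 0 := by
    intro i j hij
    have hne : i ≠ j := by
      intro h; rw [h, hρself j] at hij; omega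
    rw [hPdef]
    simp [Matrix.sub_apply, Matrix.one_apply_ne hne, Matrix.smul_apply,
      hwidthA i j hij]
  have hwidthPkB : ∀ (k : ℕ) (i j), (k + 1) * ω < ρ i j → (P ^ k * B) i j = 0 := by
    intro k
    induction k with
    | zero => intro i j h; rw [pow_zero, Matrix.one_mul]; exact hwidthB i j (by omega)
    | succ n ih =>
      intro i j h
      have : P ^ (n + 1) * B = P * (P ^ n * B) := by
        rw [pow_succ', Matrix.mul_assoc]
      rw [this]
      have hsum : ω + (n + 1) * ω = (n + 1 + 1) * ω := by ring
      exact width_mul ρ hρtri P (P ^ n * B) ω ((n + 1) * ω) hwidthP ih i j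
        (by rw [hsum]; exact h)
  -- Neumann series identity
  have hNeu : ∀ N : ℕ, A⁻¹ * B =
      L⁻¹ • (∑ k ∈ Finset.range N, P ^ k * B) + A⁻¹ * (P ^ N * B) := by
    intro N
    have hA1 : A = L • ((1 : Matrix V V ℝ) - P) := by
      rw [hPdef]
      rw [sub_sub_cancel, smul_smul, mul_inv_cancel₀ hL.ne', one_smul]
    have hgeom : ((1 : Matrix V V ℝ) - P) * (∑ k ∈ Finset.range N, P ^ k) = 1 - P ^ N := by
      have := mul_geom_sum P N
      rw [(neg_sub P (1 : Matrix V V ℝ)).symm, neg_mul, this, neg_sub]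
    have h1 : A * (L⁻¹ • ∑ k ∈ Finset.range N, P ^ k) = 1 - P ^ N := by
      rw [hA1, Matrix.smul_mul, Matrix.mul_smul, smul_smul,
        mul_inv_cancel₀ hL.ne', one_smul, hgeom]
    have h2 : A⁻¹ * B = (A⁻¹ * (A * (L⁻¹ • ∑ k ∈ Finset.range N, P ^ k))) * B
        + A⁻¹ * (P ^ N * B) := by
      rw [h1, Matrix.mul_sub, Matrix.mul_one, Matrix.sub_mul, Matrix.mul_assoc]
      abel
    rw [h2, ← Matrix.mul_assoc, Matrix.nonsing_inv_mul A hdet, Matrix.one_mul,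
      Matrix.smul_mul, Finset.smul_sum, Finset.sum_mul]
    simp_rw [Finset.smul_sum]
  -- entrywise bounds
  have hentPkB : ∀ (k : ℕ) (a b : V), |(P ^ k * B) a b| ≤ r ^ k * M := by
    intro k a b
    refine entry_bound _ _ (by positivity) ?_ a b
    intro x
    have := op_comp (X := P ^ k) (Y := B) (Kx := r ^ k) (Ky := M) (by positivity) (hPkop k) hBop x
    exact this
  have hentTail : ∀ (N : ℕ) (a b : V), |(A⁻¹ * (P ^ N * B)) a b| ≤ c⁻¹ * (r ^ N * M) := by
    intro N a b
    refine entry_bound _ _ (by positivity) ?_ a b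
    intro x
    have hPNB := op_comp (X := P ^ N) (Y := B) (Kx := r ^ N) (Ky := M) (by positivity)
      (hPkop N) hBop
    exact op_comp (X := A⁻¹) (Y := P ^ N * B) (Kx := c⁻¹) (Ky := r ^ N * M)
      (by positivity) hAinvop hPNB x
  intro i j
  set m : ℕ := (ρ i j - 1) / ω with hm
  have hvanish : ∀ k < m, (P ^ k * B) i j = 0 := by
    intro k hk
    refine hwidthPkB k i j ?_
    have h1 : m * ω ≤ ρ i j - 1 := Nat.div_mul_le_self _ _
    have h2 : (k + 1) * ω ≤ m * ω := Nat.mul_le_mul_right _ (by omega)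
    have h3 : 1 ≤ ρ i j := by
      by_contra h
      have : ρ i j = 0 := by omega
      rw [hm, this] at hk
      simp at hk
    omega
  -- geometric tail bound
  have hgeomsum : ∀ N : ℕ, m ≤ N →
      ∑ k ∈ Finset.range N, |(P ^ k * B) i j| ≤ M * (r ^ m * (1 - r)⁻¹) := by
    intro N hN
    have hsplit : Finset.range N = Finset.Ico 0 N := by rw [Finset.range_eq_Ico]
    rw [hsplit, ← Finset.sum_Ico_consecutive _ (Nat.zero_le m) hN]
    have hfirst : ∑ k ∈ Finset.Ico 0 m, |(P ^ k * B) i j| = 0 := by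
      refine Finset.sum_eq_zero fun k hk => ?_
      rw [Finset.mem_Ico] at hk
      rw [hvanish k hk.2, abs_zero]
    rw [hfirst, zero_add]
    have hsecond : ∑ k ∈ Finset.Ico m N, |(P ^ k * B) i j| ≤
        ∑ k ∈ Finset.Ico m N, r ^ k * M := by
      exact Finset.sum_le_sum fun k _ => hentPkB k i j
    refine le_trans hsecond ?_
    rw [Finset.sum_Ico_eq_sum_range]
    have heq : ∀ l : ℕ, r ^ (m + l) * M = (r ^ m * M) * r ^ l := by
      intro l; rw [pow_add]; ring
    rw [Finset.sum_congr rfl fun l _ => heq l, ← Finset.mul_sum]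
    have hgs : ∑ l ∈ Finset.range (N - m), r ^ l ≤ (1 - r)⁻¹ := by
      rw [geom_sum_eq hr1.ne]
      rw [div_le_iff_of_neg (by linarith : r - 1 < 0)]
      have h2 : (1 - r)⁻¹ * (r - 1) = -1 := by
        have hne : (1:ℝ) - r ≠ 0 := by linarith
        rw [inv_mul_eq_div, div_eq_iff hne]
        ring
      rw [h2]
      have h3 : 0 ≤ r ^ (N - m) := by positivity
      linarith
    calc r ^ m * M * ∑ l ∈ Finset.range (N - m), r ^ l
        ≤ r ^ m * M * (1 - r)⁻¹ := by
          refine mul_le_mul_of_nonneg_left hgs (by positivity)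
      _ = M * (r ^ m * (1 - r)⁻¹) := by ring
  -- bound for every N ≥ m
  have hboundN : ∀ N : ℕ, m ≤ N →
      |(A⁻¹ * B) i j| ≤ L⁻¹ * (M * (r ^ m * (1 - r)⁻¹)) + c⁻¹ * (r ^ N * M) := by
    intro N hN
    have hentry : (A⁻¹ * B) i j =
        L⁻¹ * (∑ k ∈ Finset.range N, (P ^ k * B) i j) + (A⁻¹ * (P ^ N * B)) i j := by
      rw [hNeu N]
      simp [Matrix.add_apply, Matrix.smul_apply, Matrix.sum_apply, smul_eq_mul]
    rw [hentry]
    calc |L⁻¹ * (∑ k ∈ Finset.range N, (P ^ k * B) i j) + (A⁻¹ * (P ^ N * B)) i j|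
        ≤ |L⁻¹ * (∑ k ∈ Finset.range N, (P ^ k * B) i j)| + |(A⁻¹ * (P ^ N * B)) i j| :=
          abs_add_le _ _
      _ ≤ L⁻¹ * (M * (r ^ m * (1 - r)⁻¹)) + c⁻¹ * (r ^ N * M) := by
          refine add_le_add ?_ (hentTail N i j)
          rw [abs_mul, abs_of_nonneg (by positivity : (0:ℝ) ≤ L⁻¹)]
          refine mul_le_mul_of_nonneg_left ?_ (by positivity)
          exact le_trans (Finset.abs_sum_le_sum_abs _ _) (hgeomsum N hN)
  -- pass to the limit
  have hlim : |(A⁻¹ * B) i j| ≤ L⁻¹ * (M * (r ^ m * (1 - r)⁻¹)) := by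
    have htend : Filter.Tendsto
        (fun N : ℕ => L⁻¹ * (M * (r ^ m * (1 - r)⁻¹)) + c⁻¹ * (r ^ N * M))
        Filter.atTop (nhds (L⁻¹ * (M * (r ^ m * (1 - r)⁻¹)) + c⁻¹ * (0 * M))) := by
      refine Filter.Tendsto.const_add _ ?_
      refine Filter.Tendsto.const_mul _ ?_
      exact (tendsto_pow_atTop_nhds_zero_of_lt_one hr0.le hr1).mul_const M
    simp only [zero_mul, mul_zero, add_zero] at htend
    exact ge_of_tendsto htend (Filter.eventually_atTop.mpr ⟨m, fun N hN => hboundN N hN⟩)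
  -- final arithmetic
  refine le_trans hlim ?_
  have h1mr : 1 - r = c / L := by rw [hrdef]; ring
  have heq1 : L⁻¹ * (M * (r ^ m * (1 - r)⁻¹)) = M / c * r ^ m := by
    rw [h1mr]
    field_simp
  rw [heq1]
  -- exponent comparison
  have hexp : (ρ i j : ℝ) / ω - 1 ≤ (m : ℕ) := by
    rcases Nat.eq_zero_or_pos (ρ i j) with h | h
    · have h0 : (ρ i j : ℝ) = 0 := by exact_mod_cast h
      rw [h0, zero_div]
      have hm0 : (0:ℝ) ≤ (m:ℝ) := Nat.cast_nonneg m
      linarith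
    · have hle : ρ i j ≤ ω * m + ω := by
        have hdm := Nat.div_add_mod (ρ i j - 1) ω
        have hmod : (ρ i j - 1) % ω < ω := Nat.mod_lt _ hω
        rw [← hm] at hdm
        set X := ω * m with hX
        omega
      have hle' : (ρ i j : ℝ) ≤ (ω : ℝ) * m + ω := by exact_mod_cast hle
      have hω' : (0:ℝ) < (ω:ℝ) := by exact_mod_cast hω
      rw [sub_le_iff_le_add, div_le_iff₀ hω']
      nlinarith [hle']
  have hrm : (r : ℝ) ^ m ≤ r ^ ((ρ i j : ℝ) / ω - 1) := by
    rw [← Real.rpow_natCast r m]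
    exact Real.rpow_le_rpow_of_exponent_ge hr0 hr1.le hexp
  have hrw : r ^ ((ρ i j : ℝ) / ω - 1) = r ^ ((ρ i j : ℝ) / ω) / r := by
    rw [Real.rpow_sub hr0, Real.rpow_one]
  calc M / c * r ^ m ≤ M / c * (r ^ ((ρ i j : ℝ) / ω) / r) := by
        rw [← hrw]
        exact mul_le_mul_of_nonneg_left hrm (by positivity)
    _ = L * M / (c * (L - c)) * r ^ ((ρ i j : ℝ) / ω) := by
        have hrval : r = (L - c) / L := by rw [hrdef]; field_simp
        rw [hrval]
        have hLc : L - c ≠ 0 := by linarith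
        field_simp
end
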